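/- arXiv:math/0502001 — 2 statements merged into one kernel-verified Lean document; each statement's English description precedes it below -/
import Mathlib

section
/- Let V be an n-dimensional real quadratic space, I ∈ Λ^n V a pseudoscalar, a ∈ V, and Y ∈ Λ V. Then the duality identity I(a ∧ Y) = (-1)^{n+1} a ⌟ (I Y) holds in the Clifford algebra Cl(V), where juxtaposition is the Clifford product and ⌟ is left contraction. -/
/- STATEMENT 3: In the Clifford algebra of an n-dimensional nondegenerate real quadratic
space, for any pseudoscalar I ∈ Λ^n V, any vector a and any multivector Y,
I (a ∧ Y) = (-1)^{n+1} a ⌟ (I Y), where juxtaposition is the Clifford product,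
a ∧ Y = ½(a Y + Ŷ a) is the exterior product by a vector and
a ⌟ Y = ½(a Y - Ŷ a) the left contraction by a vector. -/

noncomputable section
open CliffordAlgebra

variable {V : Type*} [AddCommGroup V] [Module ℝ V] (Q : QuadraticForm ℝ V)

/-- exterior product of a vector with a multivector inside the Clifford algebra. -/
def vWedge (a : V) (x : CliffordAlgebra Q) : CliffordAlgebra Q :=
  (2⁻¹ : ℝ) • (ι Q a * x + involute x * ι Q a)

/-- left contraction of a multivector by a vector inside the Clifford algebra. -/
def vLCont (a : V) (x : CliffordAlgebra Q) : CliffordAlgebra Q :=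
  (2⁻¹ : ℝ) • (ι Q a * x - involute x * ι Q a)

/-!
For an orthogonal basis, the vector `e j` commutes with itself and anticommutes with the other
`n - 1` factors of the blade `I = e₀ ⋯ eₙ₋₁`, so by linearity every vector satisfies
`v I = (-1)^(n+1) I v`; moreover `Î = (-1)^n I`. Moving `a` across `I` in
`a (I Y) - Î Ŷ a` with these two relations turns the contraction into `(-1)^(n+1) I (a ∧ Y)`.
-/

theorem mul_prod_ofFn_eq_smul {R A : Type*} [CommSemiring R] [Semiring A] [Algebra R A]
    {n : ℕ} (x : A) (f : Fin n → A) (s : Fin n → R) (hs : ∀ i, x * f i = s i • (f i * x)) :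
    x * (List.ofFn f).prod = (∏ i, s i) • ((List.ofFn f).prod * x) := by
  induction n with
  | zero => simp
  | succ n ih =>
    rw [List.ofFn_succ, List.prod_cons, Fin.prod_univ_succ, ← mul_assoc, hs 0,
      smul_mul_assoc, mul_assoc, ih (fun i => f i.succ) (fun i => s i.succ) (fun i => hs i.succ),
      mul_smul_comm, smul_smul, mul_assoc]

theorem prod_ite_eq_one_neg_one {R ι : Type*} [CommRing R] [Fintype ι] [DecidableEq ι] (j : ι) :
    ∏ i, (if i = j then 1 else -1 : R) = (-1) ^ (Fintype.card ι + 1) := by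
  have h : ∀ i, (if i = j then 1 else -1 : R) = -1 * if i = j then -1 else 1 := by
    intro i; split_ifs <;> ring
  simp_rw [h, Finset.prod_mul_distrib, Finset.prod_const, Finset.prod_ite_eq', Finset.card_univ,
    Finset.mem_univ, if_true, pow_succ]

section BasisBlade

variable {n : ℕ} (e : Module.Basis (Fin n) ℝ V)

def basisBlade : CliffordAlgebra Q := (List.ofFn fun i => ι Q (e i)).prod

theorem ι_mul_basisBlade_of_orthogonal
    (horth : ∀ i j, i ≠ j → QuadraticMap.polar Q (e i) (e j) = 0) (v : V) :
    ι Q v * basisBlade Q e = (-1 : ℝ) ^ (n + 1) • (basisBlade Q e * ι Q v) := by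
  suffices (LinearMap.mulRight ℝ (basisBlade Q e)).comp (ι Q) =
      (-1 : ℝ) ^ (n + 1) • (LinearMap.mulLeft ℝ (basisBlade Q e)).comp (ι Q) from
    LinearMap.congr_fun this v
  refine e.ext fun j => ?_
  simp only [LinearMap.comp_apply, LinearMap.smul_apply, LinearMap.mulRight_apply,
    LinearMap.mulLeft_apply]
  rw [basisBlade, mul_prod_ofFn_eq_smul (s := fun i => if i = j then (1 : ℝ) else -1),
    prod_ite_eq_one_neg_one, Fintype.card_fin]
  intro i
  split_ifs with hij
  · rw [hij, one_smul]
  · rw [ι_mul_ι_comm, horth j i (Ne.symm hij), map_zero, zero_sub, neg_one_smul]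

theorem involute_basisBlade : involute (basisBlade Q e) = (-1 : ℝ) ^ n • basisBlade Q e := by
  simpa only [basisBlade, List.map_ofFn, List.length_ofFn, Function.comp_def] using
    involute_prod_map_ι (Q := Q) (List.ofFn e)

end BasisBlade

theorem mul_vWedge_eq_smul_vLCont {n : ℕ} (I : CliffordAlgebra Q)
    (hcomm : ∀ v, ι Q v * I = (-1 : ℝ) ^ (n + 1) • (I * ι Q v))
    (hinv : involute I = (-1 : ℝ) ^ n • I) (a : V) (Y : CliffordAlgebra Q) :
    I * vWedge Q a Y = (-1 : ℝ) ^ (n + 1) • vLCont Q a (I * Y) := by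
  rw [vWedge, vLCont, map_mul, hinv, ← mul_assoc, hcomm]
  simp only [smul_mul_assoc, mul_smul_comm, mul_add, smul_sub, smul_smul, mul_assoc]
  match_scalars <;> ring_nf <;> simp

theorem duality_identity_general
    {V : Type*} [AddCommGroup V] [Module ℝ V]
    (Q : QuadraticForm ℝ V) (n : ℕ)
    (e : Module.Basis (Fin n) ℝ V)
    (horth : ∀ i j, i ≠ j → QuadraticMap.polar Q (e i) (e j) = 0)
    -- I is a pseudoscalar (element of the one-dimensional top exterior power):
    (I : CliffordAlgebra Q) (hI : ∃ c : ℝ, I = c • (List.ofFn fun i => ι Q (e i)).prod)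
    (a : V) (Y : CliffordAlgebra Q) :
    I * vWedge Q a Y = ((-1 : ℝ) ^ (n + 1)) • vLCont Q a (I * Y) := by
  obtain ⟨c, rfl⟩ := hI
  refine mul_vWedge_eq_smul_vLCont Q (c • basisBlade Q e) (fun v => ?_) ?_ a Y
  · rw [mul_smul_comm, ι_mul_basisBlade_of_orthogonal Q e horth, smul_mul_assoc, smul_comm]
  · rw [map_smul, involute_basisBlade, smul_comm]

theorem duality_identity
    {V : Type*} [AddCommGroup V] [Module ℝ V] [FiniteDimensional ℝ V]
    (Q : QuadraticForm ℝ V) (n : ℕ) (hn : n = Module.finrank ℝ V)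
    (hQnd : (QuadraticMap.associated (R := ℝ) Q).Nondegenerate)
    (e : Module.Basis (Fin n) ℝ V)
    (horth : ∀ i j, i ≠ j → QuadraticMap.polar Q (e i) (e j) = 0)
    -- I is a pseudoscalar (element of the one-dimensional top exterior power):
    (I : CliffordAlgebra Q) (hI : ∃ c : ℝ, I = c • (List.ofFn fun i => ι Q (e i)).prod)
    (a : V) (Y : CliffordAlgebra Q) :
    I * vWedge Q a Y = ((-1 : ℝ) ^ (n + 1)) • vLCont Q a (I * Y) :=
  duality_identity_general Q n e horth I hI a Y
end
end

section
/- Let V be an n-dimensional real quadratic space with unit pseudoscalar τ, and define the standard Hodge operator ⋆: Λ V → Λ V by ⋆X = X̃ ⌟ τ (which equals the Clifford product X̃ τ). Then ⋆ is invertible with inverse ⋆⁻¹X = τ ⌞ X̃ (which equals τ X̃), where ⌞ is the right contraction, provided τ τ̃ = 1. -/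
/- STATEMENT 4: For a unit pseudoscalar τ with τ τ̃ = 1 in the Clifford algebra of an
n-dimensional real quadratic space, the standard Hodge operator ⋆X = X̃ ⌟ τ (which
equals X̃ τ) is invertible with inverse ⋆⁻¹X = τ ⌞ X̃ (which equals τ X̃):
⋆⁻¹(⋆X) = X and ⋆(⋆⁻¹X) = X for all X. -/

noncomputable section
open CliffordAlgebra

/-- grade-k projection of a Clifford algebra element, via the exterior grading. -/
def gproj {V : Type*} [AddCommGroup V] [Module ℝ V] (Q : QuadraticForm ℝ V)
    (k : ℕ) (x : CliffordAlgebra Q) : CliffordAlgebra Q :=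
  (equivExterior Q).symm (GradedAlgebra.proj (fun i : ℕ => ⋀[ℝ]^i V) k (equivExterior Q x))

/-- left contraction of multivectors: `X ⌟ Y = Σ_{r,s} ⟨⟨X⟩_r ⟨Y⟩_s⟩_{s-r}`. -/
def lcontr {V : Type*} [AddCommGroup V] [Module ℝ V] [FiniteDimensional ℝ V]
    (Q : QuadraticForm ℝ V) (x y : CliffordAlgebra Q) : CliffordAlgebra Q :=
  ∑ r ∈ Finset.range (Module.finrank ℝ V + 1), ∑ s ∈ Finset.range (Module.finrank ℝ V + 1),
    gproj Q (s - r) (gproj Q r x * gproj Q s y)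

/-- right contraction of multivectors: `X ⌞ Y = Σ_{r,s} ⟨⟨X⟩_r ⟨Y⟩_s⟩_{r-s}`. -/
def rcontr {V : Type*} [AddCommGroup V] [Module ℝ V] [FiniteDimensional ℝ V]
    (Q : QuadraticForm ℝ V) (x y : CliffordAlgebra Q) : CliffordAlgebra Q :=
  ∑ r ∈ Finset.range (Module.finrank ℝ V + 1), ∑ s ∈ Finset.range (Module.finrank ℝ V + 1),
    gproj Q (r - s) (gproj Q r x * gproj Q s y)

/-! With an orthogonal basis `e`, the products `e_m` of distinct basis vectors span the Clifford
algebra, and `equivExterior` sends such a blade to the corresponding wedge product, so `e_m` is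
homogeneous of degree `|m|`. Multiplying `e_m` into `τ = c e_1 ⋯ e_n` (on either side) cancels the
factors of `m` up to scalars, leaving a multiple of the complementary blade, of degree `n - |m|`.
Hence the grade projection in either contraction of `e_m` with `τ` keeps the whole product, and by
linearity `X̃ ⌟ τ = X̃ τ` and `τ ⌞ X̃ = τ X̃`. Invertibility then follows from `τ τ̃ = 1` together
with `τ̃ τ = τ τ̃`, both being `c² ∏ Q(e_i)`. -/

theorem List.length_diff_of_subset {α : Type*} [DecidableEq α] {m u : List α} (hm : m.Nodup)
    (hmu : m ⊆ u) : (u.diff m).length = u.length - m.length := by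
  have h := (List.subperm_append_diff_self_of_count_le
    (List.subperm_ext_iff.1 (hm.subperm hmu))).length_eq
  rw [List.length_append] at h
  omega

namespace CliffordAlgebra

section Blade

variable {R M I : Type*} [CommRing R] [AddCommGroup M] [Module R M]
  (Q : QuadraticForm R M) (e : I → M)

def blade (l : List I) : CliffordAlgebra Q := (l.map fun i => ι Q (e i)).prod

@[simp] theorem blade_nil : blade Q e [] = 1 := rfl

@[simp] theorem blade_cons (i : I) (l : List I) :
    blade Q e (i :: l) = ι Q (e i) * blade Q e l := rfl

theorem blade_append (l m : List I) : blade Q e (l ++ m) = blade Q e l * blade Q e m := by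
  simp [blade]

theorem reverse_blade (l : List I) : reverse (blade Q e l) = blade Q e l.reverse := by
  simpa [blade, List.map_map, Function.comp_def] using reverse_prod_map_ι (Q := Q) (l.map e)

theorem reverse_blade_mul_blade (l : List I) :
    reverse (blade Q e l) * blade Q e l = algebraMap R _ (l.map fun i => Q (e i)).prod := by
  induction l with
  | nil => simp
  | cons i l ih =>
    calc reverse (blade Q e (i :: l)) * blade Q e (i :: l)
        = reverse (blade Q e l) * (ι Q (e i) * ι Q (e i)) * blade Q e l := by
          simp only [blade_cons, reverse.map_mul, reverse_ι, mul_assoc]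
      _ = algebraMap R _ (Q (e i)) * (reverse (blade Q e l) * blade Q e l) := by
          rw [ι_sq_scalar, mul_assoc, Algebra.left_comm]
      _ = _ := by rw [ih, ← map_mul, List.map_cons, List.prod_cons]

theorem commute_reverse_blade (l : List I) : Commute (reverse (blade Q e l)) (blade Q e l) := by
  have h := reverse_blade_mul_blade Q e l.reverse
  rw [← reverse_blade, reverse_reverse, List.map_reverse, List.prod_reverse] at h
  exact (reverse_blade_mul_blade Q e l).trans h.symm

variable {Q e} (horth : ∀ i j, i ≠ j → QuadraticMap.polar Q (e i) (e j) = 0)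
include horth

theorem ι_mul_blade_of_notMem {i : I} {l : List I} (hi : i ∉ l) :
    ι Q (e i) * blade Q e l = (-1 : R) ^ l.length • (blade Q e l * ι Q (e i)) := by
  induction l with
  | nil => simp
  | cons j l ih =>
    have hij : Q.IsOrtho (e i) (e j) :=
      QuadraticMap.isOrtho_polarBilin.1 (horth i j (List.ne_of_not_mem_cons hi))
    rw [blade_cons, ← mul_assoc, ι_mul_ι_comm_of_isOrtho hij, neg_mul, mul_assoc,
      ih (List.not_mem_of_not_mem_cons hi), mul_smul_comm, ← mul_assoc, List.length_cons,
      pow_succ, mul_neg_one, neg_smul]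

theorem ι_mul_blade_of_mem [DecidableEq I] {i : I} {l : List I} (hl : l.Nodup) (hi : i ∈ l) :
    ∃ c : R, ι Q (e i) * blade Q e l = c • blade Q e (l.erase i) := by
  obtain ⟨l₁, l₂, rfl⟩ := List.append_of_mem hi
  have hi₁ : i ∉ l₁ := fun h => List.disjoint_of_nodup_append hl h List.mem_cons_self
  refine ⟨(-1 : R) ^ l₁.length * Q (e i), ?_⟩
  rw [List.erase_append_right _ hi₁, List.erase_cons_head, blade_append, blade_append, blade_cons,
    ← mul_assoc, ι_mul_blade_of_notMem horth hi₁, smul_mul_assoc, mul_assoc, ← mul_assoc (ι Q _),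
    ι_sq_scalar, Algebra.left_comm, ← Algebra.smul_def, smul_smul]

theorem blade_mul_blade_of_subset [DecidableEq I] {m u : List I} (hm : m.Nodup) (hu : u.Nodup)
    (hmu : m ⊆ u) : ∃ c : R, blade Q e m * blade Q e u = c • blade Q e (u.diff m) := by
  induction m with
  | nil => exact ⟨1, by simp⟩
  | cons i m ih =>
    obtain ⟨him, hm⟩ := List.nodup_cons.1 hm
    obtain ⟨c, hc⟩ := ih hm (List.subset_of_cons_subset hmu)
    have hi : i ∈ u.diff m := (hu.mem_sdiff_iff).2 ⟨hmu List.mem_cons_self, him⟩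
    obtain ⟨c', hc'⟩ := ι_mul_blade_of_mem horth (hu.diff (l₂ := m)) hi
    refine ⟨c * c', ?_⟩
    rw [blade_cons, mul_assoc, hc, mul_smul_comm, hc', smul_smul, List.diff_cons, ← List.diff_erase]

theorem span_blade_nodup (he : Submodule.span R (Set.range e) = ⊤) :
    Submodule.span R {x | ∃ l : List I, l.Nodup ∧ x = blade Q e l} = ⊤ := by
  classical
  set S := Submodule.span R {x | ∃ l : List I, l.Nodup ∧ x = blade Q e l}
  have hS : ∀ {l : List I}, l.Nodup → blade Q e l ∈ S := fun hl =>
    Submodule.subset_span ⟨_, hl, rfl⟩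
  have hι : ∀ i, ∀ x ∈ S, ι Q (e i) * x ∈ S := by
    intro i x hx
    induction hx using Submodule.span_induction with
    | mem x hx =>
      obtain ⟨l, hl, rfl⟩ := hx
      by_cases hi : i ∈ l
      · obtain ⟨c, hc⟩ := ι_mul_blade_of_mem horth hl hi
        exact hc ▸ S.smul_mem c (hS (hl.erase i))
      · exact hS (List.nodup_cons.2 ⟨hi, hl⟩)
    | zero => simp
    | add x y _ _ hx hy => rw [mul_add]; exact S.add_mem hx hy
    | smul c x _ hx => rw [mul_smul_comm]; exact S.smul_mem c hx
  have hv : ∀ v, ∀ x ∈ S, ι Q v * x ∈ S := by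
    intro v x hx
    induction (he ▸ Submodule.mem_top : v ∈ Submodule.span R (Set.range e)) using
      Submodule.span_induction with
    | mem v hv => obtain ⟨i, rfl⟩ := hv; exact hι i x hx
    | zero => simp
    | add v w _ _ hv hw => rw [map_add, add_mul]; exact S.add_mem hv hw
    | smul c v _ hv => rw [map_smul, smul_mul_assoc]; exact S.smul_mem c hv
  rw [eq_top_iff]
  rintro x -
  induction x using left_induction with
  | algebraMap r =>
    rw [Algebra.algebraMap_eq_smul_one]
    exact S.smul_mem r (hS List.nodup_nil)
  | add x y hx hy => exact S.add_mem hx hy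
  | ι_mul x v hx => exact hv v x hx

end Blade

section Grade

variable {R M I : Type*} [CommRing R] [AddCommGroup M] [Module R M] {e : I → M}

theorem contractLeft_blade_eq_zero {Q : QuadraticForm R M} {d : Module.Dual R M} {l : List I}
    (hd : ∀ i ∈ l, d (e i) = 0) : contractLeft d (blade Q e l) = 0 := by
  induction l with
  | nil => simp
  | cons i l ih =>
    rw [blade_cons, contractLeft_ι_mul, hd i List.mem_cons_self, zero_smul, zero_sub,
      ih fun j hj => hd j (List.mem_cons_of_mem i hj), mul_zero, neg_zero]

theorem changeForm_blade {Q Q' : QuadraticForm R M} {B : LinearMap.BilinForm R M}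
    (h : B.toQuadraticMap = Q' - Q) (hB : ∀ i j, i ≠ j → B (e i) (e j) = 0) {l : List I}
    (hl : l.Nodup) : changeForm h (blade Q e l) = blade Q' e l := by
  induction l with
  | nil => simp
  | cons i l ih =>
    obtain ⟨hil, hl⟩ := List.nodup_cons.1 hl
    rw [blade_cons, changeForm_ι_mul, ih hl, blade_cons,
      contractLeft_blade_eq_zero fun j hj => hB i j (ne_of_mem_of_not_mem hj hil).symm, sub_zero]

theorem blade_mem_exteriorPower (l : List I) :
    blade (0 : QuadraticForm R M) e l ∈ ⋀[R]^l.length M := by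
  induction l with
  | nil => simp
  | cons i l ih =>
    rw [blade_cons, List.length_cons, ExteriorAlgebra.exteriorPower, pow_succ']
    exact Submodule.mul_mem_mul (LinearMap.mem_range_self _ _) ih

theorem equivExterior_blade_mem [Invertible (2 : R)] {Q : QuadraticForm R M}
    (horth : ∀ i j, i ≠ j → QuadraticMap.polar Q (e i) (e j) = 0) {l : List I} (hl : l.Nodup) :
    equivExterior Q (blade Q e l) ∈ ⋀[R]^l.length M := by
  have hB : ∀ i j, i ≠ j → QuadraticMap.associated (-Q) (e i) (e j) = 0 := fun i j hij => by
    rw [map_neg, LinearMap.neg_apply, LinearMap.neg_apply, QuadraticMap.associated_apply]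
    change -(⅟2 • QuadraticMap.polar Q (e i) (e j)) = 0
    rw [horth i j hij, smul_zero, neg_zero]
  change changeForm changeForm.associated_neg_proof (blade Q e l) ∈ _
  rw [changeForm_blade _ hB hl]
  exact blade_mem_exteriorPower l

theorem equivExterior_blade_mul_blade_mem_of_subset [Invertible (2 : R)]
    {Q : QuadraticForm R M} (horth : ∀ i j, i ≠ j → QuadraticMap.polar Q (e i) (e j) = 0)
    {m u : List I} (hm : m.Nodup) (hu : u.Nodup) (hmu : m ⊆ u) :
    equivExterior Q (blade Q e m * blade Q e u) ∈ ⋀[R]^(u.length - m.length) M := by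
  classical
  obtain ⟨c, hc⟩ := blade_mul_blade_of_subset horth hm hu hmu
  rw [hc, map_smul, ← List.length_diff_of_subset hm hmu]
  exact Submodule.smul_mem _ c (equivExterior_blade_mem horth (hu.diff (l₂ := m)))

theorem equivExterior_blade_mul_blade_mem_of_superset [Invertible (2 : R)]
    {Q : QuadraticForm R M} (horth : ∀ i j, i ≠ j → QuadraticMap.polar Q (e i) (e j) = 0)
    {m u : List I} (hm : m.Nodup) (hu : u.Nodup) (hmu : m ⊆ u) :
    equivExterior Q (blade Q e u * blade Q e m) ∈ ⋀[R]^(u.length - m.length) M := by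
  classical
  have hm' := List.nodup_reverse.2 hm
  have hmu' : m.reverse ⊆ u.reverse := fun i hi => List.mem_reverse.2 (hmu (List.mem_reverse.1 hi))
  obtain ⟨c, hc⟩ := blade_mul_blade_of_subset horth hm' (List.nodup_reverse.2 hu) hmu'
  have hprod : blade Q e u * blade Q e m = c • blade Q e (u.reverse.diff m.reverse).reverse := by
    rw [← reverse_blade, ← map_smul, ← hc, reverse.map_mul, reverse_blade, reverse_blade,
      List.reverse_reverse, List.reverse_reverse]
  have hlen : (u.reverse.diff m.reverse).reverse.length = u.length - m.length := by
    rw [List.length_reverse, List.length_diff_of_subset hm' hmu', List.length_reverse,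
      List.length_reverse]
  rw [hprod, map_smul, ← hlen]
  exact Submodule.smul_mem _ c
    (equivExterior_blade_mem horth (List.nodup_reverse.2 (List.nodup_reverse.2 hu).diff))

end Grade

end CliffordAlgebra

section Contraction

variable {V : Type*} [AddCommGroup V] [Module ℝ V] (Q : QuadraticForm ℝ V)

theorem gproj_of_mem {j : ℕ} {x : CliffordAlgebra Q} (hx : equivExterior Q x ∈ ⋀[ℝ]^j V)
    (k : ℕ) : gproj Q k x = if k = j then x else 0 := by
  rw [gproj, GradedAlgebra.proj_apply]
  split_ifs with h
  · subst h
    rw [DirectSum.decompose_of_mem_same (fun i : ℕ => ⋀[ℝ]^i V) hx, LinearEquiv.symm_apply_apply]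
  · rw [DirectSum.decompose_of_mem_ne (fun i : ℕ => ⋀[ℝ]^i V) hx (Ne.symm h), map_zero]

variable [FiniteDimensional ℝ V] {Q}

theorem lcontr_eq_mul_of_mem {x y : CliffordAlgebra Q} {a b : ℕ}
    (hx : equivExterior Q x ∈ ⋀[ℝ]^a V) (hy : equivExterior Q y ∈ ⋀[ℝ]^b V)
    (hxy : equivExterior Q (x * y) ∈ ⋀[ℝ]^(b - a) V)
    (ha : a ≤ Module.finrank ℝ V) (hb : b ≤ Module.finrank ℝ V) : lcontr Q x y = x * y := by
  have h0 (k : ℕ) : gproj Q k 0 = 0 := by simp [gproj]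
  simp [lcontr, gproj_of_mem Q hx, gproj_of_mem Q hy, gproj_of_mem Q hxy, apply_ite (gproj Q _), h0,
    Nat.lt_succ_of_le ha, Nat.lt_succ_of_le hb]

theorem rcontr_eq_mul_of_mem {x y : CliffordAlgebra Q} {a b : ℕ}
    (hx : equivExterior Q x ∈ ⋀[ℝ]^a V) (hy : equivExterior Q y ∈ ⋀[ℝ]^b V)
    (hxy : equivExterior Q (x * y) ∈ ⋀[ℝ]^(a - b) V)
    (ha : a ≤ Module.finrank ℝ V) (hb : b ≤ Module.finrank ℝ V) : rcontr Q x y = x * y := by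
  have h0 (k : ℕ) : gproj Q k 0 = 0 := by simp [gproj]
  simp [rcontr, gproj_of_mem Q hx, gproj_of_mem Q hy, gproj_of_mem Q hxy, apply_ite (gproj Q _), h0,
    Nat.lt_succ_of_le ha, Nat.lt_succ_of_le hb]

variable (Q)

theorem isLinearMap_lcontr_left (y : CliffordAlgebra Q) : IsLinearMap ℝ (lcontr Q · y) where
  map_add x x' := by simp only [lcontr, gproj, map_add, add_mul, Finset.sum_add_distrib]
  map_smul c x := by simp only [lcontr, gproj, map_smul, smul_mul_assoc, Finset.smul_sum]

theorem isLinearMap_rcontr_right (x : CliffordAlgebra Q) : IsLinearMap ℝ (rcontr Q x) where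
  map_add y y' := by simp only [rcontr, gproj, map_add, mul_add, Finset.sum_add_distrib]
  map_smul c y := by simp only [rcontr, gproj, map_smul, mul_smul_comm, Finset.smul_sum]

end Contraction

section Pseudoscalar

variable {V : Type*} [AddCommGroup V] [Module ℝ V] [FiniteDimensional ℝ V]
  {Q : QuadraticForm ℝ V} {n : ℕ} (e : Module.Basis (Fin n) ℝ V)
  (horth : ∀ i j, i ≠ j → QuadraticMap.polar Q (e i) (e j) = 0)
include horth

theorem lcontr_smul_blade_finRange (c : ℝ) (Y : CliffordAlgebra Q) :
    lcontr Q Y (c • blade Q e (List.finRange n)) = Y * (c • blade Q e (List.finRange n)) := by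
  have hn : Module.finrank ℝ V = n := by simp [Module.finrank_eq_card_basis e]
  have hu := List.nodup_finRange n
  have hτ := Submodule.smul_mem _ c (equivExterior_blade_mem horth hu)
  rw [← map_smul, List.length_finRange] at hτ
  refine DFunLike.congr_fun (LinearMap.ext_on (span_blade_nodup horth e.span_eq)
    (f := (isLinearMap_lcontr_left Q _).mk') (g := LinearMap.mulRight ℝ _) ?_) Y
  rintro _ ⟨m, hm, rfl⟩
  have hmu : m ⊆ List.finRange n := fun i _ => List.mem_finRange i
  have hmτ := Submodule.smul_mem _ c (equivExterior_blade_mul_blade_mem_of_subset horth hm hu hmu)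
  rw [← map_smul, ← mul_smul_comm, List.length_finRange] at hmτ
  exact lcontr_eq_mul_of_mem (equivExterior_blade_mem horth hm) hτ hmτ
    ((hm.length_le_card.trans_eq (Fintype.card_fin n)).trans hn.ge) hn.ge

theorem rcontr_smul_blade_finRange (c : ℝ) (Y : CliffordAlgebra Q) :
    rcontr Q (c • blade Q e (List.finRange n)) Y = (c • blade Q e (List.finRange n)) * Y := by
  have hn : Module.finrank ℝ V = n := by simp [Module.finrank_eq_card_basis e]
  have hu := List.nodup_finRange n
  have hτ := Submodule.smul_mem _ c (equivExterior_blade_mem horth hu)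
  rw [← map_smul, List.length_finRange] at hτ
  refine DFunLike.congr_fun (LinearMap.ext_on (span_blade_nodup horth e.span_eq)
    (f := (isLinearMap_rcontr_right Q _).mk') (g := LinearMap.mulLeft ℝ _) ?_) Y
  rintro _ ⟨m, hm, rfl⟩
  have hmu : m ⊆ List.finRange n := fun i _ => List.mem_finRange i
  have hτm := Submodule.smul_mem _ c (equivExterior_blade_mul_blade_mem_of_superset horth hm hu hmu)
  rw [← map_smul, ← smul_mul_assoc, List.length_finRange] at hτm
  exact rcontr_eq_mul_of_mem hτ (equivExterior_blade_mem horth hm) hτm hn.ge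
    ((hm.length_le_card.trans_eq (Fintype.card_fin n)).trans hn.ge)

end Pseudoscalar

theorem standard_hodge_invertible_general
    {V : Type*} [AddCommGroup V] [Module ℝ V] [FiniteDimensional ℝ V]
    (Q : QuadraticForm ℝ V) (n : ℕ)
    (e : Module.Basis (Fin n) ℝ V)
    (horth : ∀ i j, i ≠ j → QuadraticMap.polar Q (e i) (e j) = 0)
    -- τ is a pseudoscalar normalized so that τ τ̃ = 1:
    (τ : CliffordAlgebra Q) (hτ : ∃ c : ℝ, τ = c • (List.ofFn fun i => ι Q (e i)).prod)
    (hunit : τ * reverse τ = 1)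
    -- the Hodge operator ⋆X = X̃ ⌟ τ and its candidate inverse ⋆⁻¹X = τ ⌞ X̃ :
    (star starInv : CliffordAlgebra Q → CliffordAlgebra Q)
    (hstar : ∀ X, star X = lcontr Q (reverse X) τ)
    (hstarInv : ∀ X, starInv X = rcontr Q τ (reverse X)) :
    (∀ X, star X = reverse X * τ) ∧
    (∀ X, starInv X = τ * reverse X) ∧
    (∀ X, starInv (star X) = X) ∧
    (∀ X, star (starInv X) = X) := by
  obtain ⟨c, hc⟩ := hτ
  have hτ : τ = c • blade Q e (List.finRange n) := by
    rw [hc, List.ofFn_eq_map]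
    rfl
  have hstar' (X : CliffordAlgebra Q) : star X = reverse X * τ := by
    rw [hstar, hτ, lcontr_smul_blade_finRange e horth]
  have hstarInv' (X : CliffordAlgebra Q) : starInv X = τ * reverse X := by
    rw [hstarInv, hτ, rcontr_smul_blade_finRange e horth]
  have hunit' : reverse τ * τ = 1 := by
    rw [← hunit, hτ, map_smul]
    exact (((commute_reverse_blade Q e _).smul_left c).smul_right c).eq
  refine ⟨hstar', hstarInv', fun X => ?_, fun X => ?_⟩
  · rw [hstarInv', hstar', reverse.map_mul, reverse_reverse, ← mul_assoc, hunit, one_mul]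
  · rw [hstar', hstarInv', reverse.map_mul, reverse_reverse, mul_assoc, hunit', mul_one]

theorem standard_hodge_invertible
    {V : Type*} [AddCommGroup V] [Module ℝ V] [FiniteDimensional ℝ V]
    (Q : QuadraticForm ℝ V) (n : ℕ) (hn : n = Module.finrank ℝ V)
    (hQnd : (QuadraticMap.associated (R := ℝ) Q).Nondegenerate)
    (e : Module.Basis (Fin n) ℝ V)
    (horth : ∀ i j, i ≠ j → QuadraticMap.polar Q (e i) (e j) = 0)
    -- τ is a pseudoscalar normalized so that τ τ̃ = 1:
    (τ : CliffordAlgebra Q) (hτ : ∃ c : ℝ, τ = c • (List.ofFn fun i => ι Q (e i)).prod)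
    (hunit : τ * reverse τ = 1)
    -- the Hodge operator ⋆X = X̃ ⌟ τ and its candidate inverse ⋆⁻¹X = τ ⌞ X̃ :
    (star starInv : CliffordAlgebra Q → CliffordAlgebra Q)
    (hstar : ∀ X, star X = lcontr Q (reverse X) τ)
    (hstarInv : ∀ X, starInv X = rcontr Q τ (reverse X)) :
    (∀ X, star X = reverse X * τ) ∧
    (∀ X, starInv X = τ * reverse X) ∧
    (∀ X, starInv (star X) = X) ∧
    (∀ X, star (starInv X) = X) :=
  standard_hodge_invertible_general Q n e horth τ hτ hunit star starInv hstar hstarInv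
end
end
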